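/- arXiv:2206.06001 — 2 statements merged into one kernel-verified Lean document; each statement's English description precedes it below -/
import Mathlib

section
/- Let a, w ∈ ℂ^N and let y < 0 be real. Then the Hermitian matrix −y I + w w^H is positive definite, and the inequality a^H (−y I + w w^H)^{-1} a ≤ 1 holds if and only if y² + y(‖a‖² − ‖w‖²) − (‖w‖²‖a‖² − |a^H w|²) ≥ 0. -/
/-!
By the Sherman–Morrison formula, `(t I + w wᴴ)⁻¹ = t⁻¹ I - w wᴴ / (t (t + ‖w‖²))` for `t = -y > 0`,
so `aᴴ (t I + w wᴴ)⁻¹ a = ‖a‖² / t - |aᴴ w|² / (t (t + ‖w‖²))`. Multiplying the inequality by the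
positive number `t (t + ‖w‖²)` turns it into the stated quadratic condition on `y`.
-/

open Matrix
open scoped ComplexOrder

/-- Squared Euclidean norm of a complex vector. -/
noncomputable def nsq {N : ℕ} (a : Fin N → ℂ) : ℝ := ∑ i, Complex.normSq (a i)

namespace Matrix

theorem dotProduct_vecMulVec_mulVec {R n : Type*} [CommSemiring R] [Fintype n]
    (x u v y : n → R) : x ⬝ᵥ vecMulVec u v *ᵥ y = (x ⬝ᵥ u) * (v ⬝ᵥ y) := by
  rw [dotProduct_mulVec, vecMul_vecMulVec, smul_dotProduct, smul_eq_mul]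

theorem inv_smul_one_add_vecMulVec {K n : Type*} [Field K] [Fintype n] [DecidableEq n] {t : K}
    (u v : n → K) (ht : t ≠ 0) (hc : t + v ⬝ᵥ u ≠ 0) :
    (t • 1 + vecMulVec u v)⁻¹ = t⁻¹ • 1 - (t * (t + v ⬝ᵥ u))⁻¹ • vecMulVec u v := by
  refine inv_eq_right_inv ?_
  have hcoeff : t * -(t * (t + v ⬝ᵥ u))⁻¹ + t⁻¹ - (t * (t + v ⬝ᵥ u))⁻¹ * (v ⬝ᵥ u) = 0 := by
    field_simp; ring
  calc (t • 1 + vecMulVec u v) * (t⁻¹ • 1 - (t * (t + v ⬝ᵥ u))⁻¹ • vecMulVec u v)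
      = (t * t⁻¹) • 1 + (t * -(t * (t + v ⬝ᵥ u))⁻¹ + t⁻¹
          - (t * (t + v ⬝ᵥ u))⁻¹ * (v ⬝ᵥ u)) • vecMulVec u v := by
        have hsq : vecMulVec u v * vecMulVec u v = (v ⬝ᵥ u) • vecMulVec u v := by
          rw [vecMulVec_mul_vecMulVec, vecMulVec_smul]
        simp only [add_mul, mul_sub, smul_mul_assoc, mul_smul_comm, one_mul, mul_one, hsq]
        module
    _ = 1 := by rw [hcoeff, mul_inv_cancel₀ ht, one_smul, zero_smul, add_zero]

end Matrix

theorem nsq_nonneg {N : ℕ} (a : Fin N → ℂ) : 0 ≤ nsq a :=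
  Finset.sum_nonneg fun _ _ => Complex.normSq_nonneg _

theorem star_dotProduct_self_eq_nsq {N : ℕ} (a : Fin N → ℂ) : star a ⬝ᵥ a = nsq a := by
  simp only [dotProduct, nsq, Complex.ofReal_sum, Pi.star_apply, Complex.star_def, mul_comm,
    Complex.mul_conj]

theorem star_dotProduct_mul_star_dotProduct {N : ℕ} (a w : Fin N → ℂ) :
    (star a ⬝ᵥ w) * (star w ⬝ᵥ a) = (‖star a ⬝ᵥ w‖ ^ 2 : ℝ) := by
  rw [star_dotProduct w a, Complex.star_def, Complex.mul_conj, Complex.normSq_eq_norm_sq]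

theorem star_dotProduct_inv_mulVec {N : ℕ} (a w : Fin N → ℂ) {t : ℝ} (ht : 0 < t) :
    star a ⬝ᵥ (t • (1 : Matrix (Fin N) (Fin N) ℂ) + vecMulVec w (star w))⁻¹ *ᵥ a
      = ((nsq a / t - ‖star a ⬝ᵥ w‖ ^ 2 / (t * (t + nsq w)) : ℝ) : ℂ) := by
  have ht' : (t : ℂ) ≠ 0 := by exact_mod_cast ht.ne'
  have hc : (t : ℂ) + star w ⬝ᵥ w ≠ 0 := by
    rw [star_dotProduct_self_eq_nsq]
    exact_mod_cast (add_pos_of_pos_of_nonneg ht (nsq_nonneg w)).ne'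
  rw [← Complex.coe_smul, inv_smul_one_add_vecMulVec w (star w) ht' hc, sub_mulVec, smul_mulVec,
    smul_mulVec, one_mulVec, dotProduct_sub, dotProduct_smul, dotProduct_smul,
    dotProduct_vecMulVec_mulVec, star_dotProduct_mul_star_dotProduct, star_dotProduct_self_eq_nsq,
    star_dotProduct_self_eq_nsq, smul_eq_mul, smul_eq_mul]
  push_cast
  ring

theorem posDef_smul_one_add_vecMulVec {N : ℕ} (w : Fin N → ℂ) {t : ℝ} (ht : 0 < t) :
    (t • (1 : Matrix (Fin N) (Fin N) ℂ) + vecMulVec w (star w)).PosDef :=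
  (PosDef.one.smul ht).add_posSemidef (posSemidef_vecMulVec_self_star w)

/-- For `y < 0`, the Hermitian matrix `−yI + wwᴴ` is positive definite, and
`aᴴ(−yI + wwᴴ)⁻¹ a ≤ 1` holds iff `y² + y(‖a‖² − ‖w‖²) − (‖w‖²‖a‖² − |aᴴw|²) ≥ 0`. -/
theorem stmt_8 {N : ℕ} (a w : Fin N → ℂ) (y : ℝ) (hy : y < 0) :
    ((-y : ℝ) • (1 : Matrix (Fin N) (Fin N) ℂ) + Matrix.vecMulVec w (star w)).PosDef ∧
    ((star a ⬝ᵥ ((-y : ℝ) • (1 : Matrix (Fin N) (Fin N) ℂ) +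
        Matrix.vecMulVec w (star w))⁻¹.mulVec a).re ≤ 1 ↔
      0 ≤ y ^ 2 + y * (nsq a - nsq w) -
        (nsq w * nsq a - ‖star a ⬝ᵥ w‖ ^ 2)) := by
  have ht : 0 < -y := neg_pos.mpr hy
  refine ⟨posDef_smul_one_add_vecMulVec w ht, ?_⟩
  have hs := nsq_nonneg w
  rw [star_dotProduct_inv_mulVec a w ht, Complex.ofReal_re, div_sub_div _ _ ht.ne' (by positivity),
    div_le_one (by positivity)]
  constructor <;> intro h <;> nlinarith
end

section
/- (Proposition 5.) Under the stated primal feasibility, dual feasibility, complementary slackness conditions, z₁ = tr(R̂ W) > 0, and the equality x λ_{N−1}(C̄) + y₁ + y₂ = 0, the following hold: (1) x < 0 and tr(C̄ Z) < λ_{N−1}(C̄) tr Z; (2) z₁ = (tr(C̄ Z) + z₂ λ_{N−1}(C̄))/Δ₀; (3) y₁ + y₂ > 0; (4) λ₁(W) ≥ −x(λ_{N−1}(C̄) − λ_N(C̄)); (5) if moreover W = w w^H for some w ∈ ℂ^N and λ_{N−1}(C̄) > λ_N(C̄), then w^H R̂ w ≥ −x(λ_{N−1}(C̄) − λ_N(C̄))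 λ_N(R̂). -/
/-!
Complementary slackness gives `tr(R̂W) = tr(ZW) = x tr(C̄Z) + (y₁ + y₂) tr Z`, and the equality
case gives `y₁ + y₂ = -x λ_{N-1}(C̄)`, so `z₁ = x (tr(C̄Z) - λ_{N-1}(C̄) tr Z)`. The normalisation
`Δ₀x + (N - η₁)y₁ + (N + η₂)y₂ = 1` rules out `y₁ + y₂ = 0`; hence `x < 0`, and the sign of `z₁`
gives (1). Testing `W ⪰ xC̄ + (y₁ + y₂)I` on a unit eigenvector of `C̄` for `λ_N(C̄)` gives (4).
For `W = wwᴴ`, `wᴴR̂w ≥ λ_N(R̂)‖w‖² = λ_N(R̂) tr W ≥ λ_N(R̂) λ₁(W)`, where `λ_N(R̂) ≥ 0`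
as `R̂ ⪰ Z ⪰ 0`.
-/

open Matrix
open scoped ComplexOrder

/-- The eigenvalues of a Hermitian matrix listed in decreasing order:
`eigDesc hA 0 ≥ eigDesc hA 1 ≥ … ≥ eigDesc hA (N-1)`. -/
noncomputable def eigDesc {N : ℕ} {A : Matrix (Fin N) (Fin N) ℂ} (hA : A.IsHermitian)
    (i : Fin N) : ℝ :=
  hA.eigenvalues (Tuple.sort hA.eigenvalues i.rev)

namespace Matrix.IsHermitian

open scoped MatrixOrder

variable {n 𝕜 : Type*} [Fintype n] [DecidableEq n] [RCLike 𝕜] {A : Matrix n n 𝕜}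
  (hA : A.IsHermitian)

lemma le_re_dotProduct_mulVec_of_le_eigenvalues {c : ℝ} (h : ∀ i, c ≤ hA.eigenvalues i)
    (v : n → 𝕜) :
    c * RCLike.re (star v ⬝ᵥ v) ≤ RCLike.re (star v ⬝ᵥ A *ᵥ v) := by
  have hle := (algebraMap_le_iff_le_spectrum (r := c) hA.isSelfAdjoint).2 <| by
    rw [hA.spectrum_real_eq_range_eigenvalues]
    rintro _ ⟨i, rfl⟩
    exact h i
  rw [Matrix.le_iff, Algebra.algebraMap_eq_smul_one] at hle
  have := hle.re_dotProduct_nonneg v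
  simp only [sub_mulVec, smul_mulVec, one_mulVec, dotProduct_sub, dotProduct_smul, map_sub,
    RCLike.smul_re] at this
  linarith

lemma re_dotProduct_mulVec_le_of_eigenvalues_le {c : ℝ} (h : ∀ i, hA.eigenvalues i ≤ c)
    (v : n → 𝕜) :
    RCLike.re (star v ⬝ᵥ A *ᵥ v) ≤ c * RCLike.re (star v ⬝ᵥ v) := by
  have hle := (le_algebraMap_iff_spectrum_le (r := c) hA.isSelfAdjoint).2 <| by
    rw [hA.spectrum_real_eq_range_eigenvalues]
    rintro _ ⟨i, rfl⟩
    exact h i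
  rw [Matrix.le_iff, Algebra.algebraMap_eq_smul_one] at hle
  have := hle.re_dotProduct_nonneg v
  simp only [sub_mulVec, smul_mulVec, one_mulVec, dotProduct_sub, dotProduct_smul, map_sub,
    RCLike.smul_re] at this
  linarith

lemma star_dotProduct_eigenvectorBasis_self (j : n) :
    star ⇑(hA.eigenvectorBasis j) ⬝ᵥ ⇑(hA.eigenvectorBasis j) = 1 := by
  rw [dotProduct_comm, ← EuclideanSpace.inner_eq_star_dotProduct, inner_self_eq_norm_sq_to_K,
    hA.eigenvectorBasis.orthonormal.1 j]
  simp

end Matrix.IsHermitian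

lemma Matrix.trace_mul_eq_of_trace_eq_zero {n α : Type*} [Fintype n] [DecidableEq n]
    [CommRing α] {R Z W C : Matrix n n α} {x y : α} (hRZ : trace ((R - Z) * W) = 0)
    (hZ : trace (Z * (W - x • C - y • 1)) = 0) :
    trace (R * W) = x * trace (C * Z) + y * trace Z := by
  rw [sub_mul, trace_sub, sub_eq_zero] at hRZ
  rw [mul_sub, mul_sub, trace_sub, trace_sub, Matrix.mul_smul, Matrix.mul_smul, mul_one,
    trace_smul, trace_smul, trace_mul_comm Z C, smul_eq_mul, smul_eq_mul, sub_sub,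
    sub_eq_zero] at hZ
  rw [hRZ, hZ]

section eigDesc

variable {N : ℕ} {A : Matrix (Fin N) (Fin N) ℂ}

lemma eigDesc_antitone (hA : A.IsHermitian) : Antitone (eigDesc hA) := fun _ _ hij =>
  Tuple.monotone_sort hA.eigenvalues (Fin.rev_le_rev.2 hij)

lemma eigenvalues_eq_eigDesc (hA : A.IsHermitian) (j : Fin N) :
    hA.eigenvalues j = eigDesc hA ((Tuple.sort hA.eigenvalues).symm j).rev := by
  simp [eigDesc]

lemma eigDesc_last_le_eigenvalues (hA : A.IsHermitian) (hN : 0 < N) (j : Fin N) :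
    eigDesc hA ⟨N - 1, by omega⟩ ≤ hA.eigenvalues j := by
  rw [eigenvalues_eq_eigDesc hA j]
  exact eigDesc_antitone hA (Fin.le_def.2 (by simp; omega))

lemma eigenvalues_le_eigDesc_zero (hA : A.IsHermitian) (hN : 0 < N) (j : Fin N) :
    hA.eigenvalues j ≤ eigDesc hA ⟨0, hN⟩ := by
  rw [eigenvalues_eq_eigDesc hA j]
  exact eigDesc_antitone hA (Fin.le_def.2 (Nat.zero_le _))

lemma Matrix.PosSemidef.eigDesc_nonneg (hA : A.PosSemidef) (i : Fin N) :
    0 ≤ eigDesc hA.isHermitian i :=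
  hA.eigenvalues_nonneg _

lemma Matrix.PosSemidef.eigDesc_zero_le_re_trace (hA : A.PosSemidef) (hN : 0 < N) :
    eigDesc hA.isHermitian ⟨0, hN⟩ ≤ (trace A).re := by
  rw [hA.isHermitian.trace_eq_sum_eigenvalues, Complex.re_sum]
  exact Finset.single_le_sum (f := fun i => hA.isHermitian.eigenvalues i)
    (fun i _ => hA.eigenvalues_nonneg i) (Finset.mem_univ _)

end eigDesc

lemma mul_eigenvalues_add_le_eigDesc_zero {N : ℕ} (hN : 0 < N) {W C : Matrix (Fin N) (Fin N) ℂ}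
    (hW : W.IsHermitian) (hC : C.IsHermitian) {x y : ℝ}
    (h : (W - (x : ℂ) • C - (y : ℂ) • 1).PosSemidef) (j : Fin N) :
    x * hC.eigenvalues j + y ≤ eigDesc hW ⟨0, hN⟩ := by
  have hv := hC.star_dotProduct_eigenvectorBasis_self j
  have hlow := h.re_dotProduct_nonneg (hC.eigenvectorBasis j)
  have hup := hW.re_dotProduct_mulVec_le_of_eigenvalues_le (eigenvalues_le_eigDesc_zero hW hN)
    (hC.eigenvectorBasis j)
  simp only [sub_mulVec, smul_mulVec, one_mulVec, hC.mulVec_eigenvectorBasis, dotProduct_sub,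
    dotProduct_smul, hv, map_sub, smul_eq_mul, Complex.real_smul, mul_one, RCLike.re_to_complex,
    Complex.re_ofReal_mul, Complex.ofReal_re, Complex.one_re] at hlow hup
  linarith

lemma Matrix.PosSemidef.mul_eigDesc_last_le_re_dotProduct_mulVec {N : ℕ}
    {R W : Matrix (Fin N) (Fin N) ℂ} (hR : R.PosSemidef) (hW : W.PosSemidef) {w : Fin N → ℂ}
    (hWw : W = vecMulVec w (star w)) (hN : 0 < N) {c : ℝ}
    (hc : c ≤ eigDesc hW.isHermitian ⟨0, hN⟩) :
    c * eigDesc hR.isHermitian ⟨N - 1, by omega⟩ ≤ (star w ⬝ᵥ R *ᵥ w).re := by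
  have htr : (trace W).re = (star w ⬝ᵥ w).re := by
    rw [hWw, trace_vecMulVec, dotProduct_comm]
  calc c * eigDesc hR.isHermitian ⟨N - 1, by omega⟩
      ≤ (trace W).re * eigDesc hR.isHermitian ⟨N - 1, by omega⟩ :=
        mul_le_mul_of_nonneg_right (hc.trans (hW.eigDesc_zero_le_re_trace hN))
          (hR.eigDesc_nonneg _)
    _ = eigDesc hR.isHermitian ⟨N - 1, by omega⟩ * (star w ⬝ᵥ w).re := by rw [htr, mul_comm]
    _ ≤ (star w ⬝ᵥ R *ᵥ w).re :=
        hR.isHermitian.le_re_dotProduct_mulVec_of_le_eigenvalues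
          (eigDesc_last_le_eigenvalues hR.isHermitian hN) w

/-- Proposition 5: under primal feasibility, dual feasibility, complementary slackness,
`z₁ = tr(R̂W) > 0`, and `xλ_{N−1}(C̄) + y₁ + y₂ = 0`, one has (1) `x < 0` and
`tr(C̄Z) < λ_{N−1}(C̄) tr Z`; (2) `z₁ = (tr(C̄Z) + z₂λ_{N−1}(C̄))/Δ₀`; (3) `y₁ + y₂ > 0`;
(4) `λ₁(W) ≥ −x(λ_{N−1}(C̄) − λ_N(C̄))`; (5) if `W = wwᴴ` and `λ_{N−1}(C̄) > λ_N(C̄)`,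
then `wᴴR̂w ≥ −x(λ_{N−1}(C̄) − λ_N(C̄))λ_N(R̂)`. -/
theorem stmt_16 {N : ℕ} (hN : 2 ≤ N) (η₁ η₂ : ℝ) (hη₁0 : 0 ≤ η₁)
    (hη₂ : 0 ≤ η₂) (Δ₀ : ℝ) (hΔ₀ : 0 < Δ₀)
    (Cbar : Matrix (Fin N) (Fin N) ℂ) (hC : Cbar.PosSemidef)
    (Rhat : Matrix (Fin N) (Fin N) ℂ) (hR : Rhat.IsHermitian)
    (W Z : Matrix (Fin N) (Fin N) ℂ) (x y₁ y₂ z₁ z₂ : ℝ)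
    -- primal feasibility
    (hW : W.PosSemidef) (hx : x ≤ 0) (hy₁ : 0 ≤ y₁)
    (hlin : Δ₀ * x + ((N : ℝ) - η₁) * y₁ + ((N : ℝ) + η₂) * y₂ = 1)
    (hLMI : (W - (x : ℂ) • Cbar - ((y₁ + y₂ : ℝ) : ℂ) • 1).PosSemidef)
    -- dual feasibility
    (hZ : Z.PosSemidef) (hRZ : (Rhat - Z).PosSemidef)
    -- complementary slackness
    (hc1 : Matrix.trace ((Rhat - Z) * W) = 0)
    (hc2 : x * ((Matrix.trace (Cbar * Z)).re - Δ₀ * z₁ +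
        eigDesc hC.isHermitian ⟨N - 2, by omega⟩ * z₂) = 0)
    (hc6 : Matrix.trace (Z * (W - (x : ℂ) • Cbar - ((y₁ + y₂ : ℝ) : ℂ) • 1)) = 0)
    -- zero duality gap and positive optimal value
    (hz₁ : z₁ = (Matrix.trace (Rhat * W)).re) (hz₁pos : 0 < z₁)
    -- equality
    (heq : x * eigDesc hC.isHermitian ⟨N - 2, by omega⟩ + y₁ + y₂ = 0) :
    (x < 0 ∧ (Matrix.trace (Cbar * Z)).re <
        eigDesc hC.isHermitian ⟨N - 2, by omega⟩ * (Matrix.trace Z).re) ∧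
    z₁ = ((Matrix.trace (Cbar * Z)).re + z₂ * eigDesc hC.isHermitian ⟨N - 2, by omega⟩) / Δ₀ ∧
    0 < y₁ + y₂ ∧
    eigDesc hW.isHermitian ⟨0, by omega⟩ ≥
      -x * (eigDesc hC.isHermitian ⟨N - 2, by omega⟩ -
        eigDesc hC.isHermitian ⟨N - 1, by omega⟩) ∧
    (∀ w : Fin N → ℂ, W = Matrix.vecMulVec w (star w) →
      eigDesc hC.isHermitian ⟨N - 1, by omega⟩ < eigDesc hC.isHermitian ⟨N - 2, by omega⟩ →
      (star w ⬝ᵥ Rhat.mulVec w).re ≥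
        -x * (eigDesc hC.isHermitian ⟨N - 2, by omega⟩ -
          eigDesc hC.isHermitian ⟨N - 1, by omega⟩) * eigDesc hR ⟨N - 1, by omega⟩) := by
  have hN0 : 0 < N := by omega
  have hlam := hC.eigDesc_nonneg ⟨N - 2, by omega⟩
  have hy : 0 < y₁ + y₂ := by
    by_contra! h
    nlinarith [mul_nonneg hη₁0 hy₁, mul_nonneg hη₂ hy₁, mul_nonpos_iff.2 (Or.inr ⟨hx, hlam⟩)]
  have hx' : x < 0 := hx.lt_of_ne (by rintro rfl; linarith)
  have hgap := congrArg Complex.re (trace_mul_eq_of_trace_eq_zero hc1 hc6)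
  simp only [Complex.add_re, Complex.re_ofReal_mul, ← hz₁] at hgap
  have hz : z₁ = x * ((Matrix.trace (Cbar * Z)).re -
      eigDesc hC.isHermitian ⟨N - 2, by omega⟩ * (Matrix.trace Z).re) := by
    linear_combination hgap + (Matrix.trace Z).re * heq
  have hW₁ : x * eigDesc hC.isHermitian ⟨N - 1, by omega⟩ + (y₁ + y₂) ≤
      eigDesc hW.isHermitian ⟨0, hN0⟩ :=
    mul_eigenvalues_add_le_eigDesc_zero hN0 hW.isHermitian hC.isHermitian hLMI _
  refine ⟨⟨hx', sub_neg.mp (neg_of_mul_pos_right (hz ▸ hz₁pos) hx)⟩, ?_, hy, by linarith, ?_⟩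
  · field_simp
    linarith [(mul_eq_zero.mp hc2).resolve_left hx'.ne]
  · intro w hWw _
    have hRpsd : Rhat.PosSemidef := sub_add_cancel Rhat Z ▸ hRZ.add hZ
    exact hRpsd.mul_eigDesc_last_le_re_dotProduct_mulVec hW hWw hN0 (by linarith)
end
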